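/- If A = Σ_i s_i Z_i with s_i independent random variables and Z_i fixed rank-one square matrices, and A is almost surely invertible, then (E[A])^{-1} · E[det(A)] = E[det(A) · A^{-1}]; consequently, if E[det(A)] ≠ 0, then (E[A])^{-1} = E[det(A) A^{-1}] / E[det(A)]. -/

import Mathlib

/-!
Expanding `det (∑ i, t i • Z i)` multilinearly in the rows, a term that takes two rows from the
same `Z i` vanishes because `Z i` has rank at most one; so the determinant is a combination of
monomials `∏ i ∈ S, t i` without repeated indices, and for independent `s i` the expectation of
each such monomial factorizes: `E[det A] = det E[A]`. A cofactor of `A` is the determinant of `A`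
with one row replaced by a unit vector, which has the same shape plus a constant rank-one matrix;
hence also `E[adj A] = adj E[A]`, and `det A • A⁻¹ = adj A` for invertible `A`.
-/

open MeasureTheory Matrix

open scoped Matrix.Norms.L2Operator

namespace Matrix

variable {m ι R K : Type*} [Fintype m] [DecidableEq m]

theorem det_sum_smul [Fintype ι] [DecidableEq ι] [CommRing R] (W : ι → Matrix m m R)
    (t : ι → R) :
    det (∑ i, t i • W i) = ∑ g : m → ι, (∏ j, t (g j)) * det (of fun j => W (g j) j) := by
  have hrows : (∑ i, t i • W i : Matrix m m R) = fun j => ∑ i, t i • W i j := by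
    ext j k; simp [Matrix.sum_apply]
  change detRowAlternating _ = ∑ g : m → ι, _ * detRowAlternating _
  rw [hrows, ← AlternatingMap.coe_multilinearMap, MultilinearMap.map_sum]
  exact Finset.sum_congr rfl fun g _ =>
    MultilinearMap.map_smul_univ _ (fun j => t (g j)) (fun j => W (g j) j)

theorem det_of_rows_eq_zero_of_rank_le_one [Field K] (W : ι → Matrix m m K)
    (hW : ∀ i, (W i).rank ≤ 1) {g : m → ι} (hg : ¬ g.Injective) :
    det (of fun j => W (g j) j) = 0 := by
  obtain ⟨j, j', hgj, hjj'⟩ := Function.not_injective_iff.mp hg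
  refine det_eq_zero_of_not_linearIndependent_rows fun hli => ?_
  have hpair := hli.comp ![j, j'] fun a b => by
    fin_cases a <;> fin_cases b <;> simp [hjj', hjj'.symm]
  have hspan : Submodule.span K (Set.range ((fun k => of (fun j => W (g j) j) k) ∘ ![j, j'])) ≤
      Submodule.span K (Set.range (W (g j)).row) := by
    refine Submodule.span_mono (Set.range_subset_iff.mpr fun a => ?_)
    fin_cases a
    · exact ⟨j, rfl⟩
    · exact ⟨j', by rw [hgj]; rfl⟩
  have h2 := Submodule.finrank_mono hspan
  rw [finrank_span_eq_card hpair, Fintype.card_fin, ← rank_eq_finrank_span_row] at h2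
  exact absurd (h2.trans (hW (g j))) (by norm_num)

theorem det_sum_smul_of_rank_le_one [Fintype ι] [DecidableEq ι] [Field K]
    (W : ι → Matrix m m K) (hW : ∀ i, (W i).rank ≤ 1) (t : ι → K) :
    det (∑ i, t i • W i) =
      ∑ g : m ↪ ι, (∏ i ∈ Finset.univ.map g, t i) * det (of fun j => W (g j) j) := by
  rw [det_sum_smul]
  refine (Fintype.sum_of_injective (fun g : m ↪ ι => ⇑g) DFunLike.coe_injective _ _
    (fun g hg => ?_) (fun g => by rw [Finset.prod_map])).symm
  rw [det_of_rows_eq_zero_of_rank_le_one W hW fun hinj => hg ⟨⟨g, hinj⟩, rfl⟩, mul_zero]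

theorem rank_updateRow_zero_le [Field K] (Z : Matrix m m K) (q : m) :
    (updateRow Z q 0).rank ≤ Z.rank := by
  have : updateRow Z q 0 = diagonal (fun j => if j = q then 0 else 1) * Z := by
    ext j k; by_cases hj : j = q <;> simp [diagonal_mul, hj]
  exact this ▸ rank_mul_le_right _ _

theorem rank_single_one_le [Field K] (p q : m) : (single p q (1 : K)).rank ≤ 1 :=
  single_eq_single_vecMulVec_single (α := K) p q ▸ rank_vecMulVec_le _ _

theorem adjugate_sum_smul_apply [Fintype ι] [CommRing R] (Z : ι → Matrix m m R) (t : ι → R)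
    (p q : m) :
    adjugate (∑ i, t i • Z i) p q = det (single q p 1 + ∑ i, t i • updateRow (Z i) q 0) := by
  rw [adjugate_apply]
  congr 1
  ext j k
  by_cases hj : j = q
  · subst hj; simp [Matrix.sum_apply, single_apply, Pi.single_apply, eq_comm]
  · simp [Matrix.sum_apply, hj, Ne.symm hj]

theorem det_smul_inv_eq_adjugate [CommRing R] {A : Matrix m m R} (hA : IsUnit A) :
    A.det • A⁻¹ = A.adjugate := by
  rw [inv_def, smul_smul, Ring.mul_inverse_cancel _ ((isUnit_iff_isUnit_det A).mp hA), one_smul]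

end Matrix

theorem ProbabilityTheory.iIndepFun.integral_finset_prod {Ω ι : Type*} [MeasurableSpace Ω]
    {μ : Measure Ω} {s : ι → Ω → ℝ} (h : iIndepFun s μ) (hs : ∀ i, AEStronglyMeasurable (s i) μ)
    (T : Finset ι) : ∫ ω, ∏ i ∈ T, s i ω ∂μ = ∏ i ∈ T, ∫ ω, s i ω ∂μ := by
  have := (h.precomp (g := ((↑) : T → ι)) Subtype.val_injective).integral_fun_prod_eq_prod_integral
    fun i => hs i
  rwa [Finset.prod_coe_sort T fun i => ∫ ω, s i ω ∂μ,
    integral_congr_ae (ae_of_all μ fun ω => Finset.prod_coe_sort T fun i => s i ω)] at this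

section Expectation

variable {Ω m ι : Type*} [MeasurableSpace Ω] {μ : Measure Ω} [Fintype m] [DecidableEq m]
  [Fintype ι]

theorem integral_det_sum_smul_of_rank_le_one (W : ι → Matrix m m ℝ) (hW : ∀ i, (W i).rank ≤ 1)
    (σ : ι → Ω → ℝ) (hint : ∀ T : Finset ι, Integrable (fun ω => ∏ i ∈ T, σ i ω) μ)
    (hmom : ∀ T : Finset ι, ∫ ω, ∏ i ∈ T, σ i ω ∂μ = ∏ i ∈ T, ∫ ω, σ i ω ∂μ) :
    ∫ ω, det (∑ i, σ i ω • W i) ∂μ = det (∑ i, (∫ ω, σ i ω ∂μ) • W i) := by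
  classical
  simp_rw [det_sum_smul_of_rank_le_one W hW]
  rw [integral_finsetSum _ fun g _ => (hint _).mul_const _]
  simp_rw [integral_mul_const, hmom]

theorem integral_det_add_sum_smul_of_rank_le_one [IsProbabilityMeasure μ] (C : Matrix m m ℝ)
    (hC : C.rank ≤ 1) (W : ι → Matrix m m ℝ) (hW : ∀ i, (W i).rank ≤ 1)
    (σ : ι → Ω → ℝ) (hint : ∀ T : Finset ι, Integrable (fun ω => ∏ i ∈ T, σ i ω) μ)
    (hmom : ∀ T : Finset ι, ∫ ω, ∏ i ∈ T, σ i ω ∂μ = ∏ i ∈ T, ∫ ω, σ i ω ∂μ) :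
    ∫ ω, det (C + ∑ i, σ i ω • W i) ∂μ = det (C + ∑ i, (∫ ω, σ i ω ∂μ) • W i) := by
  -- `C` is the coefficient matrix of an extra index `none` carrying the constant variable `1`.
  let σ' : Option ι → Ω → ℝ := fun o ω => Option.elim' 1 (σ · ω) o
  have hprod (T : Finset (Option ι)) (ω : Ω) : ∏ o ∈ T, σ' o ω = ∏ i ∈ T.eraseNone, σ i ω :=
    (Finset.prod_eraseNone _ T).symm
  have hσ' (o : Option ι) : ∫ ω, σ' o ω ∂μ = Option.elim' 1 (fun i => ∫ ω, σ i ω ∂μ) o := by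
    cases o <;> simp [σ']
  have hint' (T : Finset (Option ι)) : Integrable (fun ω => ∏ o ∈ T, σ' o ω) μ := by
    simpa only [hprod] using hint T.eraseNone
  have hmom' (T : Finset (Option ι)) :
      ∫ ω, ∏ o ∈ T, σ' o ω ∂μ = ∏ o ∈ T, ∫ ω, σ' o ω ∂μ := by
    rw [integral_congr_ae (ae_of_all μ (hprod T)), hmom, Finset.prod_eraseNone]
    exact Finset.prod_congr rfl fun o _ => (hσ' o).symm
  have key := integral_det_sum_smul_of_rank_le_one (Option.elim' C W) (Option.rec hC hW) σ'
    hint' hmom'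
  simpa [σ', Fintype.sum_option, hσ'] using key

end Expectation

theorem Matrix.integral_apply {Ω m n : Type*} [MeasurableSpace Ω] {μ : Measure Ω} [Fintype m]
    [Fintype n] [DecidableEq n] {F : Ω → Matrix m n ℝ} (hF : Integrable F μ) (i : m) (j : n) :
    (∫ ω, F ω ∂μ) i j = ∫ ω, F ω i j ∂μ :=
  ((entryLinearMap ℝ ℝ i j).toContinuousLinearMap.integral_comp_comm hF).symm

theorem inverse_expectation_det_weighted_general {Ω : Type*} [MeasurableSpace Ω] (μ : Measure Ω)
    [IsProbabilityMeasure μ] {n d : ℕ}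
    (Z : Fin n → Matrix (Fin d) (Fin d) ℝ) (hZ : ∀ i, (Z i).rank ≤ 1)
    (s : Fin n → Ω → ℝ) (hmeas : ∀ i, Measurable (s i))
    (hindep : ProbabilityTheory.iIndepFun s μ)
    (hint : ∀ S : Finset (Fin n), Integrable (fun ω => ∏ i ∈ S, s i ω) μ)
    (A : Ω → Matrix (Fin d) (Fin d) ℝ) (hA : ∀ ω, A ω = ∑ i, s i ω • Z i)
    (hinv : ∀ᵐ ω ∂μ, IsUnit (A ω))
    (hEA : IsUnit (∑ i, (∫ ω, s i ω ∂μ) • Z i))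
    (hadjint : Integrable (fun ω => (A ω).det • (A ω)⁻¹) μ) :
    (∫ ω, (A ω).det ∂μ) • (∑ i, (∫ ω, s i ω ∂μ) • Z i)⁻¹
        = ∫ ω, (A ω).det • (A ω)⁻¹ ∂μ ∧
    ((∫ ω, (A ω).det ∂μ) ≠ 0 →
      (∑ i, (∫ ω, s i ω ∂μ) • Z i)⁻¹
        = (∫ ω, (A ω).det ∂μ)⁻¹ • ∫ ω, (A ω).det • (A ω)⁻¹ ∂μ) := by
  set B := ∑ i, (∫ ω, s i ω ∂μ) • Z i with hB
  have hmom := hindep.integral_finset_prod fun i => (hmeas i).aestronglyMeasurable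
  have hdet : ∫ ω, (A ω).det ∂μ = B.det := by
    simp_rw [hA]
    exact integral_det_sum_smul_of_rank_le_one Z hZ s hint hmom
  have hadj_ae : (fun ω => (A ω).det • (A ω)⁻¹) =ᵐ[μ] fun ω => (A ω).adjugate := by
    filter_upwards [hinv] with ω h using det_smul_inv_eq_adjugate h
  have hadj : ∫ ω, (A ω).det • (A ω)⁻¹ ∂μ = B.adjugate := by
    ext p q
    rw [integral_congr_ae hadj_ae, Matrix.integral_apply (hadjint.congr hadj_ae)]
    simp_rw [hA, hB, adjugate_sum_smul_apply]
    exact integral_det_add_sum_smul_of_rank_le_one _ (rank_single_one_le q p) _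
      (fun i => (rank_updateRow_zero_le (Z i) q).trans (hZ i)) s hint hmom
  have hmain : (∫ ω, (A ω).det ∂μ) • B⁻¹ = ∫ ω, (A ω).det • (A ω)⁻¹ ∂μ := by
    rw [hdet, hadj, det_smul_inv_eq_adjugate hEA]
  exact ⟨hmain, fun hne => by rw [← hmain, smul_smul, inv_mul_cancel₀ hne, one_smul]⟩

/-- If `A = ∑ i, s i • Z i` (s i independent, Z i rank one) is a.s. invertible, then
`(E[A])⁻¹ * E[det A] = E[det A • A⁻¹]`; consequently if `E[det A] ≠ 0` then
`(E[A])⁻¹ = E[det A • A⁻¹] / E[det A]`. -/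
theorem inverse_expectation_det_weighted {Ω : Type*} [MeasurableSpace Ω] (μ : Measure Ω)
    [IsProbabilityMeasure μ] {n d : ℕ}
    (Z : Fin n → Matrix (Fin d) (Fin d) ℝ) (hZ : ∀ i, (Z i).rank ≤ 1)
    (s : Fin n → Ω → ℝ) (hmeas : ∀ i, Measurable (s i))
    (hindep : ProbabilityTheory.iIndepFun s μ)
    (hint : ∀ S : Finset (Fin n), Integrable (fun ω => ∏ i ∈ S, s i ω) μ)
    (A : Ω → Matrix (Fin d) (Fin d) ℝ) (hA : ∀ ω, A ω = ∑ i, s i ω • Z i)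
    (hinv : ∀ᵐ ω ∂μ, IsUnit (A ω))
    (hEA : IsUnit (∑ i, (∫ ω, s i ω ∂μ) • Z i))
    (hdetint : Integrable (fun ω => (A ω).det) μ)
    (hadjint : Integrable (fun ω => (A ω).det • (A ω)⁻¹) μ) :
    (∫ ω, (A ω).det ∂μ) • (∑ i, (∫ ω, s i ω ∂μ) • Z i)⁻¹
        = ∫ ω, (A ω).det • (A ω)⁻¹ ∂μ ∧
    ((∫ ω, (A ω).det ∂μ) ≠ 0 →
      (∑ i, (∫ ω, s i ω ∂μ) • Z i)⁻¹
        = (∫ ω, (A ω).det ∂μ)⁻¹ • ∫ ω, (A ω).det • (A ω)⁻¹ ∂μ) :=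
  inverse_expectation_det_weighted_general μ Z hZ s hmeas hindep hint A hA hinv hEA hadjint
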